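/- Let X be exponential(1), V exponential(2), independent, and g1 = (ρ^r-1)/ρ, g2 = (ρ^{2r}-1)/ρ. Then P(X + V < g2 | X < g1) = (e^{-2g2} - e^{-g1} - e^{-2g2+g1} + 1)/(1 - e^{-g1}), and for 0 < r < 1/2 this is exponentially equal to ρ^{2r-1} as ρ→∞. -/

import Mathlib

/-!
The law of `X` is `expMeasure 1`, so `P(X < a) = 1 - e^{-a}`, and integrating the law of `V`
against it gives `P(X + V < c, X < a) = (1 - e^{-a}) (1 - e^{a - 2c})` for `0 ≤ a ≤ c`.
Hence `P ρ = 1 - e^{-T ρ}` with `T = 2 g2 - g1 = (2ρ^{2r} - ρ^r - 1)/ρ ~ 2ρ^{2r-1}`.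
For `r < 1/2` this tends to `0`, so `1 - e^{-T} ~ T ~ 2ρ^{2r-1}`, and a function asymptotic to
a positive multiple of `ρ^s` has `log f / log ρ → s`.
-/

open MeasureTheory ProbabilityTheory Filter Real Set Topology

lemma expMeasure_Iic {c : ℝ} (hc : 0 < c) (x : ℝ) :
    expMeasure c (Iic x) = ENNReal.ofReal (if 0 ≤ x then 1 - exp (-(c * x)) else 0) := by
  have := isProbabilityMeasure_expMeasure hc
  rw [← ofReal_cdf, cdf_expMeasure_eq hc]

lemma expMeasure_Iio {c : ℝ} (hc : 0 < c) (x : ℝ) :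
    expMeasure c (Iio x) = ENNReal.ofReal (if 0 ≤ x then 1 - exp (-(c * x)) else 0) := by
  have hx : expMeasure c {x} = 0 := withDensity_absolutelyContinuous _ _ (measure_singleton x)
  rw [measure_congr (Iio_ae_eq_Iic' hx), expMeasure_Iic hc]

lemma map_eq_expMeasure_of_measure_lt {Ω : Type*} [MeasurableSpace Ω] {μ : Measure Ω}
    [IsProbabilityMeasure μ] {W : Ω → ℝ} (hW : Measurable W) {c : ℝ} (hc : 0 < c)
    (ht : ∀ x, 0 ≤ x → μ {ω | x < W ω} = ENNReal.ofReal (exp (-(c * x)))) :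
    μ.map W = expMeasure c := by
  have hle : ∀ x, 0 ≤ x → μ {ω | W ω ≤ x} = ENNReal.ofReal (1 - exp (-(c * x))) := by
    intro x hx
    have hcompl : {ω | W ω ≤ x} = {ω | x < W ω}ᶜ := by ext; simp
    rw [hcompl, prob_compl_eq_one_sub (measurableSet_lt measurable_const hW), ht x hx,
      ← ENNReal.ofReal_one, ← ENNReal.ofReal_sub _ (exp_pos _).le]
  have := isProbabilityMeasure_expMeasure hc
  refine Measure.ext_of_Iic _ _ fun x => ?_
  rw [Measure.map_apply hW measurableSet_Iic, expMeasure_Iic hc]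
  split_ifs with hx
  · exact hle x hx
  · rw [ENNReal.ofReal_zero]
    refine measure_mono_null (fun ω (hω : W ω ≤ x) => ?_) ((hle 0 le_rfl).trans (by simp))
    exact (hω.trans (not_le.mp hx).le : W ω ≤ 0)

lemma integral_exp_neg_mul_one_sub_exp (a c : ℝ) :
    ∫ x in (0 : ℝ)..a, exp (-x) * (1 - exp (-(2 * (c - x)))) =
      (1 - exp (-a)) * (1 - exp (a - 2 * c)) := by
  have hderiv : ∀ x, HasDerivAt (fun x => -exp (-x) - exp (x - 2 * c))
      (exp (-x) * (1 - exp (-(2 * (c - x))))) x := by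
    intro x
    have h := ((hasDerivAt_neg x).exp.neg).sub (((hasDerivAt_id x).sub_const (2 * c)).exp)
    refine h.congr_deriv ?_
    rw [mul_sub, ← exp_add, id]
    ring_nf
  rw [intervalIntegral.integral_eq_sub_of_hasDerivAt (fun x _ => hderiv x)
    (by apply Continuous.intervalIntegrable; fun_prop)]
  have hexp : exp (-a) * exp (a - 2 * c) = exp (-(2 * c)) := by rw [← exp_add]; ring_nf
  simp only [neg_zero, exp_zero, zero_sub]
  linear_combination -hexp

lemma setLIntegral_expMeasure_one_Iio {g : ℝ → ℝ} (hg : Continuous g) {a : ℝ} (ha : 0 ≤ a)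
    (hg0 : ∀ x ∈ Icc 0 a, 0 ≤ g x) :
    ∫⁻ x in Iio a, ENNReal.ofReal (g x) ∂expMeasure 1 =
      ENNReal.ofReal (∫ x in (0 : ℝ)..a, exp (-x) * g x) := by
  have hpdf : Measurable (exponentialPDF 1) :=
    (measurable_exponentialPDFReal 1).ennreal_ofReal
  have hdens : ∀ x, exponentialPDF 1 x * ENNReal.ofReal (g x) =
      (Ici 0).indicator (fun x => ENNReal.ofReal (exp (-x) * g x)) x := by
    intro x
    rcases lt_or_ge x 0 with hx | hx
    · simp [exponentialPDF_of_neg hx, hx]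
    · rw [indicator_of_mem (mem_Ici.mpr hx), exponentialPDF_of_nonneg hx,
        ← ENNReal.ofReal_mul (by positivity)]
      norm_num
  rw [show expMeasure 1 = volume.withDensity (exponentialPDF 1) from rfl,
    setLIntegral_withDensity_eq_setLIntegral_mul _ hpdf (by fun_prop) measurableSet_Iio]
  simp only [Pi.mul_apply, hdens]
  rw [lintegral_indicator measurableSet_Ici, Measure.restrict_restrict measurableSet_Ici,
    Ici_inter_Iio, setLIntegral_congr Ico_ae_eq_Ioc, intervalIntegral.integral_of_le ha,
    ofReal_integral_eq_lintegral_ofReal]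
  · exact (Continuous.integrableOn_Icc (by fun_prop)).mono_set Ioc_subset_Icc_self
  · exact ae_restrict_of_forall_mem measurableSet_Ioc fun x hx =>
      mul_nonneg (exp_pos _).le (hg0 x (Ioc_subset_Icc_self hx))

lemma expMeasure_one_prod_two_add_lt_inter_lt {a c : ℝ} (ha : 0 ≤ a) (hac : a ≤ c) :
    (expMeasure 1).prod (expMeasure 2) ({p | p.1 + p.2 < c} ∩ {p | p.1 < a}) =
      ENNReal.ofReal ((1 - exp (-a)) * (1 - exp (a - 2 * c))) := by
  set S : Set (ℝ × ℝ) := {p | p.1 + p.2 < c} ∩ {p | p.1 < a} with hS_def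
  have hS : MeasurableSet S := by measurability
  have hslice : ∀ x, expMeasure 2 (Prod.mk x ⁻¹' S) =
      (Iio a).indicator (fun x => ENNReal.ofReal (1 - exp (-(2 * (c - x))))) x := by
    intro x
    rcases lt_or_ge x a with hx | hx
    · have : Prod.mk x ⁻¹' S = Iio (c - x) := by
        ext v; simp [hS_def, hx, lt_sub_iff_add_lt']
      rw [this, expMeasure_Iio two_pos, if_pos (by linarith),
        indicator_of_mem (mem_Iio.mpr hx)]
    · have : Prod.mk x ⁻¹' S = ∅ := by
        ext v; simp [hS_def, hx.not_gt]
      rw [this, measure_empty, indicator_of_notMem (notMem_Iio.mpr hx)]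
  have := isProbabilityMeasure_expMeasure (two_pos : (0 : ℝ) < 2)
  rw [Measure.prod_apply hS, lintegral_congr hslice, lintegral_indicator measurableSet_Iio,
    setLIntegral_expMeasure_one_Iio (by fun_prop) ha, integral_exp_neg_mul_one_sub_exp]
  intro x hx
  rw [sub_nonneg, exp_le_one_iff]
  nlinarith [hx.2]

lemma measure_add_lt_inter_lt_toReal_div {Ω : Type*} [MeasurableSpace Ω] {μ : Measure Ω}
    [IsProbabilityMeasure μ] {X V : Ω → ℝ} (hX : Measurable X) (hV : Measurable V)
    (hXV : IndepFun X V μ) (hmX : μ.map X = expMeasure 1) (hmV : μ.map V = expMeasure 2)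
    {a c : ℝ} (ha : 0 < a) (hac : a ≤ c) :
    (μ ({ω | X ω + V ω < c} ∩ {ω | X ω < a})).toReal / (μ {ω | X ω < a}).toReal =
      1 - exp (a - 2 * c) := by
  have hjoint : μ ({ω | X ω + V ω < c} ∩ {ω | X ω < a}) =
      ENNReal.ofReal ((1 - exp (-a)) * (1 - exp (a - 2 * c))) := by
    have hprod : μ.map (fun ω => (X ω, V ω)) = (expMeasure 1).prod (expMeasure 2) := by
      rw [← hmX, ← hmV]
      exact (indepFun_iff_map_prod_eq_prod_map_map hX.aemeasurable hV.aemeasurable).mp hXV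
    rw [← expMeasure_one_prod_two_add_lt_inter_lt ha.le hac, ← hprod,
      Measure.map_apply (hX.prodMk hV) (by measurability)]
    rfl
  have hmarg : μ {ω | X ω < a} = ENNReal.ofReal (1 - exp (-a)) := by
    rw [show {ω | X ω < a} = X ⁻¹' Iio a from rfl, ← Measure.map_apply hX measurableSet_Iio,
      hmX, expMeasure_Iio one_pos, if_pos ha.le, one_mul]
  have hmarg_pos : 0 < 1 - exp (-a) := by
    rw [sub_pos, exp_lt_one_iff]
    linarith
  have hcond_nonneg : 0 ≤ 1 - exp (a - 2 * c) := by
    rw [sub_nonneg, exp_le_one_iff]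
    linarith
  rw [hjoint, hmarg, ENNReal.toReal_ofReal (mul_nonneg hmarg_pos.le hcond_nonneg),
    ENNReal.toReal_ofReal hmarg_pos.le, mul_div_cancel_left₀ _ hmarg_pos.ne']

lemma tendsto_log_div_log_of_tendsto_div_rpow {f : ℝ → ℝ} {s L : ℝ} (hL : 0 < L)
    (hf : Tendsto (fun ρ => f ρ / ρ ^ s) atTop (𝓝 L)) :
    Tendsto (fun ρ => log (f ρ) / log ρ) atTop (𝓝 s) := by
  have hlim : Tendsto (fun ρ => s + log (f ρ / ρ ^ s) / log ρ) atTop (𝓝 s) := by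
    simpa using tendsto_const_nhds.add ((hf.log hL.ne').div_atTop tendsto_log_atTop)
  refine hlim.congr' ?_
  filter_upwards [eventually_gt_atTop 1, hf.eventually_const_lt hL] with ρ hρ hpos
  have hρs : 0 < ρ ^ s := rpow_pos_of_pos (by linarith) s
  have hlogρ : log ρ ≠ 0 := (log_pos hρ).ne'
  rw [log_div ((div_pos_iff_of_pos_right hρs).mp hpos).ne' hρs.ne', log_rpow (by linarith)]
  field_simp
  ring

lemma tendsto_one_sub_exp_neg_div_self :
    Tendsto (fun t => (1 - exp (-t)) / t) (𝓝[≠] 0) (𝓝 1) := by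
  have h : HasDerivAt (fun t => 1 - exp (-t)) 1 0 := by
    simpa using ((hasDerivAt_neg (0 : ℝ)).exp).const_sub 1
  simpa [div_eq_inv_mul] using h.tendsto_slope_zero

lemma tendsto_log_one_sub_exp_neg_div_log {T : ℝ → ℝ} {s L : ℝ} (hs : s < 0) (hL : 0 < L)
    (hT : Tendsto (fun ρ => T ρ / ρ ^ s) atTop (𝓝 L)) :
    Tendsto (fun ρ => log (1 - exp (-T ρ)) / log ρ) atTop (𝓝 s) := by
  have hTne : ∀ᶠ ρ in atTop, T ρ ≠ 0 := by
    filter_upwards [hT.eventually_const_lt hL] with ρ hρ h0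
    simp [h0] at hρ
  have hT0 : Tendsto T atTop (𝓝[≠] 0) := by
    refine tendsto_nhdsWithin_iff.mpr ⟨?_, hTne⟩
    have h := (tendsto_rpow_neg_atTop (neg_pos.mpr hs)).mul hT
    rw [neg_neg, zero_mul] at h
    refine h.congr' ?_
    filter_upwards [eventually_gt_atTop 0] with ρ hρ
    field_simp [(rpow_pos_of_pos hρ s).ne']
  refine tendsto_log_div_log_of_tendsto_div_rpow hL ?_
  have h := (tendsto_one_sub_exp_neg_div_self.comp hT0).mul hT
  rw [one_mul] at h
  refine h.congr' ?_
  filter_upwards [hTne] with ρ hρ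
  simp only [Function.comp_apply]
  field_simp

lemma tendsto_two_mul_rpow_two_mul_sub_rpow_sub_one_div {r : ℝ} (hr : 0 < r) :
    Tendsto (fun ρ : ℝ => (2 * ρ ^ (2 * r) - ρ ^ r - 1) / ρ / ρ ^ (2 * r - 1)) atTop
      (𝓝 2) := by
  have hu : Tendsto (fun ρ : ℝ => (ρ ^ r)⁻¹) atTop (𝓝 0) :=
    (tendsto_rpow_atTop hr).inv_tendsto_atTop
  have h := ((tendsto_const_nhds (x := (2 : ℝ))).sub hu).sub (hu.pow 2)
  rw [sub_zero, zero_pow two_ne_zero, sub_zero] at h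
  refine h.congr' ?_
  filter_upwards [eventually_gt_atTop 0] with ρ hρ
  have hρr : 0 < ρ ^ r := rpow_pos_of_pos hρ r
  rw [rpow_sub_one hρ.ne', mul_comm 2 r, rpow_mul hρ.le, rpow_two]
  field_simp

/-- For independent `X ~ exponential(1)` and `V ~ exponential(2)`, with
`g1 = (ρ^r-1)/ρ` and `g2 = (ρ^{2r}-1)/ρ`:
`P(X+V < g2 | X < g1) = (e^{-2g2} - e^{-g1} - e^{-2g2+g1} + 1)/(1 - e^{-g1})`,
and for `0 < r < 1/2` this is exponentially equal to `ρ^{2r-1}`. -/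
theorem stmt7 {Ω : Type*} [MeasurableSpace Ω] (μ : Measure Ω) [IsProbabilityMeasure μ]
    (X V : Ω → ℝ) (hX : Measurable X) (hV : Measurable V)
    (hXV : IndepFun X V μ)
    (htX : ∀ x : ℝ, 0 ≤ x → μ {ω | x < X ω} = ENNReal.ofReal (Real.exp (-x)))
    (htV : ∀ x : ℝ, 0 ≤ x → μ {ω | x < V ω} = ENNReal.ofReal (Real.exp (-2 * x)))
    (r : ℝ) (hr0 : 0 < r) (hr : r < 1/2)
    (g1 g2 : ℝ → ℝ)
    (hg1 : ∀ ρ : ℝ, g1 ρ = (ρ ^ r - 1) / ρ)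
    (hg2 : ∀ ρ : ℝ, g2 ρ = (ρ ^ (2*r) - 1) / ρ)
    (P : ℝ → ℝ)
    (hP : ∀ ρ : ℝ, P ρ =
      (μ ({ω | X ω + V ω < g2 ρ} ∩ {ω | X ω < g1 ρ})).toReal
        / (μ {ω | X ω < g1 ρ}).toReal) :
    (∀ ρ : ℝ, 1 < ρ →
      P ρ = (Real.exp (-2 * g2 ρ) - Real.exp (-(g1 ρ))
              - Real.exp (-2 * g2 ρ + g1 ρ) + 1) / (1 - Real.exp (-(g1 ρ)))) ∧
    Tendsto (fun ρ : ℝ => Real.log (P ρ) / Real.log ρ) atTop (nhds (2*r - 1)) := by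
  have hmX := map_eq_expMeasure_of_measure_lt hX one_pos fun x hx => by rw [htX x hx, one_mul]
  have hmV := map_eq_expMeasure_of_measure_lt hV two_pos fun x hx => by rw [htV x hx, neg_mul]
  have hg : ∀ ρ, 1 < ρ → 0 < g1 ρ ∧ g1 ρ ≤ g2 ρ := by
    intro ρ hρ
    have hρ0 : 0 < ρ := by linarith
    refine ⟨?_, ?_⟩
    · rw [hg1]
      exact div_pos (sub_pos.mpr (one_lt_rpow hρ hr0)) hρ0
    · rw [hg1, hg2]
      gcongr
      · exact hρ.le
      · linarith
  have hP_eq : ∀ ρ, 1 < ρ → P ρ = 1 - exp (-(2 * g2 ρ - g1 ρ)) := by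
    intro ρ hρ
    rw [hP, measure_add_lt_inter_lt_toReal_div hX hV hXV hmX hmV (hg ρ hρ).1 (hg ρ hρ).2,
      neg_sub]
  refine ⟨fun ρ hρ => ?_, ?_⟩
  · have hden : 1 - exp (-g1 ρ) ≠ 0 := by
      rw [sub_ne_zero, ne_comm, Ne, exp_eq_one_iff]
      exact (neg_neg_of_pos (hg ρ hρ).1).ne
    have hexp : exp (-g1 ρ) * exp (-(2 * g2 ρ - g1 ρ)) = exp (-2 * g2 ρ) := by
      rw [← exp_add]; ring_nf
    rw [hP_eq ρ hρ, eq_div_iff hden, show -2 * g2 ρ + g1 ρ = -(2 * g2 ρ - g1 ρ) by ring]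
    linear_combination hexp
  · have hT : Tendsto (fun ρ => (2 * g2 ρ - g1 ρ) / ρ ^ (2 * r - 1)) atTop (𝓝 2) := by
      convert tendsto_two_mul_rpow_two_mul_sub_rpow_sub_one_div hr0 using 2 with ρ
      rw [hg1, hg2]
      ring
    refine (tendsto_log_one_sub_exp_neg_div_log (by linarith) two_pos hT).congr' ?_
    filter_upwards [eventually_gt_atTop 1] with ρ hρ
    rw [hP_eq ρ hρ]
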